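/- arXiv:2304.13881 — 6 statements merged into one kernel-verified Lean document; each statement's English description precedes it below -/
import Mathlib

section
/- Let G : ℝⁿ → 𝔽 be twice continuously differentiable, let W ⊆ 𝔽 be a linear subspace, and let x̄, d ∈ ℝⁿ be such that DG(x̄)d lies in the orthogonal complement of W. If there exists a neighborhood V of x̄ such that the dimension of DG(x)*[W] is the same for all x ∈ V, then there exist ε > 0 and a twice continuously differentiable curve ξ : (−ε, ε) → ℝⁿ with ξ(0) = x̄, ξ′(0) = d, and ⟨G(ξ(t)), V⟩ = ⟨G(x̄), V⟩ for every t ∈ (−ε, ε) and every V ∈ W. -/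
/-!
Put `h = P ∘ G` with `P` the orthogonal projection onto `W`. Then `⟪G y, V⟫ = ⟪h y, V⟫` for
`V ∈ W`, `Dh(x)` has adjoint `DG(x)*` restricted to `W`, so `Dh` has locally constant rank, and
`Dh(x̄) d = 0`. Choose projections `π` of the target onto `range Dh(x̄)` and `p` of the source onto
`K = ker (π ∘ Dh(x̄))`. Then `Φ = (p, π ∘ h)` has invertible derivative at `x̄`, and the curve
`ξ t = Φ⁻¹ (Φ x̄ + t (d, 0))` keeps `π ∘ h` constant. Near `x̄` the map `π ∘ Dh(x)` stays
surjective, so by the rank condition it has the same kernel as `Dh(x)`; hence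
`(h ∘ ξ)' = Dh(ξ) ξ' = 0`.
-/

open Set Module RealInnerProductSpace Filter Topology Function

theorem LinearMap.bijective_prod_of_surjective {R E F : Type*} [Ring R] [AddCommGroup E]
    [Module R E] [AddCommGroup F] [Module R F] (B : E →ₗ[R] F) (hB : Surjective B)
    (p : E →ₗ[R] ker B) (hp : ∀ k : ker B, p k = k) : Bijective (p.prod B) := by
  constructor
  · rw [← ker_eq_bot, ker_prod, eq_bot_iff]
    rintro u ⟨hpu, hBu⟩
    have : (⟨u, hBu⟩ : ker B) = 0 := by rw [← hp ⟨u, hBu⟩]; exact hpu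
    simpa using congrArg Subtype.val this
  · rintro ⟨k, y⟩
    obtain ⟨u, rfl⟩ := hB y
    have hpu : B (p u) = 0 := (p u).2
    have hk : B k = 0 := k.2
    refine ⟨u - p u + k, Prod.ext ?_ ?_⟩
    · simp [hp]
    · simp [hpu, hk]

section ContinuousFamily

variable {𝕜 X E F F' : Type*} [NontriviallyNormedField 𝕜] [CompleteSpace 𝕜] [TopologicalSpace X]
  [NormedAddCommGroup E] [NormedSpace 𝕜 E] [NormedAddCommGroup F] [NormedSpace 𝕜 F]
  [NormedAddCommGroup F'] [NormedSpace 𝕜 F'] [FiniteDimensional 𝕜 F']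
  {x₀ : X}

theorem ContinuousAt.eventually_surjective {f : X → E →L[𝕜] F'} (hf : ContinuousAt f x₀)
    (hsurj : Surjective (f x₀)) : ∀ᶠ x in 𝓝 x₀, Surjective (f x) := by
  have := FiniteDimensional.complete 𝕜 F'
  obtain ⟨g, hg⟩ := (f x₀ : E →ₗ[𝕜] F').exists_rightInverse_of_surjective
    (LinearMap.range_eq_top.2 hsurj)
  let R : F' →L[𝕜] E := g.toContinuousLinearMap
  have hR : f x₀ ∘L R = 1 := by
    ext y
    exact LinearMap.congr_fun hg y
  -- `f x ∘L R` is close to `f x₀ ∘L R = 1`, hence invertible.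
  have hcont : ContinuousAt (fun x ↦ f x ∘L R) x₀ := hf.clm_comp continuousAt_const
  have hunit : ∀ᶠ x in 𝓝 x₀, IsUnit (f x ∘L R) :=
    hcont.eventually_mem (Units.isOpen.mem_nhds (by simp [hR]))
  filter_upwards [hunit] with x hx y
  obtain ⟨S, hS⟩ := hx.exists_right_inv
  exact ⟨R (S y), by simpa using congrArg (· y) hS⟩

theorem ContinuousAt.eventually_ker_comp_eq_ker [FiniteDimensional 𝕜 E]
    {f : X → E →L[𝕜] F} (hf : ContinuousAt f x₀) (π : F →L[𝕜] F')
    (hπ : Surjective (π ∘L f x₀))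
    (hrank : ∀ᶠ x in 𝓝 x₀, finrank 𝕜 (f x).range ≤ finrank 𝕜 F') :
    ∀ᶠ x in 𝓝 x₀, (π ∘L f x).ker = (f x).ker := by
  filter_upwards [(continuousAt_const.clm_comp hf).eventually_surjective hπ, hrank]
    with x hsurj hx
  refine (Submodule.eq_of_le_of_finrank_le (fun v hv ↦ ?_) ?_).symm
  · simp_all
  · have h₁ := (f x).finrank_range_add_finrank_ker
    have h₂ := (π ∘L f x).finrank_range_add_finrank_ker
    rw [LinearMap.range_eq_top.2 hsurj, finrank_top] at h₂
    omega

end ContinuousFamily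

section Curves

variable {E F F' : Type*} [NormedAddCommGroup E] [NormedSpace ℝ E]
  [NormedAddCommGroup F] [NormedSpace ℝ F] [NormedAddCommGroup F'] [NormedSpace ℝ F']

theorem ContDiffAt.exists_curve_map_eq_line [CompleteSpace E] {Φ : E → F} {x₀ : E} {k : ℕ}
    (hk : k ≠ 0) (hΦ : ContDiffAt ℝ k Φ x₀) {e : E ≃L[ℝ] F}
    (he : HasFDerivAt Φ (e : E →L[ℝ] F) x₀) (v : F) :
    ∃ ξ : ℝ → E, ξ 0 = x₀ ∧ HasDerivAt ξ (e.symm v) 0 ∧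
      ∀ᶠ t in 𝓝 0, ContDiffAt ℝ k ξ t ∧ Φ (ξ t) = Φ x₀ + t • v := by
  have hk' : (k : WithTop ℕ∞) ≠ 0 := by exact_mod_cast hk
  set ψ := hΦ.localInverse he hk'
  have hline : HasDerivAt (fun t : ℝ ↦ Φ x₀ + t • v) v 0 := by
    simpa using ((hasDerivAt_id (0 : ℝ)).smul_const v).const_add (Φ x₀)
  have hline_tendsto : Tendsto (fun t : ℝ ↦ Φ x₀ + t • v) (𝓝 0) (𝓝 (Φ x₀)) := by
    simpa using hline.continuousAt.tendsto
  have hψ : ContDiffAt ℝ k ψ (Φ x₀) := hΦ.to_localInverse he hk'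
  refine ⟨fun t ↦ ψ (Φ x₀ + t • v), by simp [ψ, hΦ.localInverse_apply_image he hk'], ?_, ?_⟩
  · exact (hΦ.hasStrictFDerivAt' he hk').to_localInverse.hasFDerivAt.comp_hasDerivAt_of_eq 0
      hline (by simp)
  · have hnear := (hψ.eventually (by simp)).and
      (hΦ.hasStrictFDerivAt' he hk').eventually_right_inverse
    filter_upwards [hline_tendsto.eventually hnear] with t ⟨hψt, hright⟩
    exact ⟨hψt.comp t (contDiffAt_const.add (contDiffAt_id.smul contDiffAt_const)), hright⟩

theorem IsOpen.is_const_of_ker_comp_fderiv_eq {h : E → F} {π : F →L[ℝ] F'} {ξ : ℝ → E}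
    {s : Set ℝ} {c : F'} (hs : IsOpen s) (hs' : IsPreconnected s) (hh : Differentiable ℝ h)
    (hξ : DifferentiableOn ℝ ξ s) (hπ : ∀ t ∈ s, π (h (ξ t)) = c)
    (hker : ∀ t ∈ s, (π ∘L fderiv ℝ h (ξ t)).ker = (fderiv ℝ h (ξ t)).ker)
    {t₀ t : ℝ} (ht₀ : t₀ ∈ s) (ht : t ∈ s) : h (ξ t) = h (ξ t₀) := by
  refine hs.is_const_of_deriv_eq_zero hs' (hh.comp_differentiableOn hξ) (fun τ hτ ↦ ?_) ht ht₀
  have hderiv : HasDerivAt (h ∘ ξ) (fderiv ℝ h (ξ τ) (deriv ξ τ)) τ :=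
    (hh _).hasFDerivAt.comp_hasDerivAt τ ((hξ.differentiableAt (hs.mem_nhds hτ)).hasDerivAt)
  have hπ_const : HasDerivAt (π ∘ h ∘ ξ) 0 τ :=
    (hasDerivAt_const τ c).congr_of_eventuallyEq
      (eventually_of_mem (hs.mem_nhds hτ) fun σ hσ ↦ hπ σ hσ)
  have hmem : deriv ξ τ ∈ (π ∘L fderiv ℝ h (ξ τ)).ker :=
    (π.hasFDerivAt.comp_hasDerivAt τ hderiv).unique hπ_const
  rw [hker τ hτ] at hmem
  simpa [hderiv.deriv] using hmem

theorem ContDiff.exists_curve_of_finrank_range_fderiv_le [FiniteDimensional ℝ E] {h : E → F}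
    {k : ℕ} (hk : k ≠ 0) (hh : ContDiff ℝ k h) {x₀ d : E} (hd : fderiv ℝ h x₀ d = 0)
    (hrank : ∀ᶠ x in 𝓝 x₀, finrank ℝ (fderiv ℝ h x).range ≤ finrank ℝ (fderiv ℝ h x₀).range) :
    ∃ ε > 0, ∃ ξ : ℝ → E, ContDiffOn ℝ k ξ (Ioo (-ε) ε) ∧ ξ 0 = x₀ ∧ deriv ξ 0 = d ∧
      ∀ t ∈ Ioo (-ε) ε, h (ξ t) = h x₀ := by
  have hk' : (k : WithTop ℕ∞) ≠ 0 := by exact_mod_cast hk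
  set A := fderiv ℝ h x₀
  obtain ⟨π, hπ⟩ := Submodule.ClosedComplemented.of_finiteDimensional A.range
  have hπA : Surjective (π ∘L A) := by
    rintro ⟨_, u, rfl⟩
    exact ⟨u, hπ ⟨A u, u, rfl⟩⟩
  set K := (π ∘L A).ker
  obtain ⟨p, hp⟩ := Submodule.ClosedComplemented.of_finiteDimensional K
  set Φ : E → K × A.range := fun x ↦ (p x, π (h x))
  have hΦC : ContDiff ℝ k Φ := p.contDiff.prodMk (π.contDiff.comp hh)
  have hΦ' : ∀ x, HasFDerivAt Φ (p.prod (π ∘L fderiv ℝ h x)) x := fun x ↦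
    p.hasFDerivAt.prodMk (π.hasFDerivAt.comp x ((hh.differentiable hk' x).hasFDerivAt))
  have hbij : Bijective (p.prod (π ∘L A)) :=
    LinearMap.bijective_prod_of_surjective (π ∘L A : E →ₗ[ℝ] A.range) hπA p hp
  set e := (LinearEquiv.ofBijective _ hbij).toContinuousLinearEquiv
  have hdK : d ∈ K := by simp [K, hd]
  have hpd : p d = ⟨d, hdK⟩ := hp ⟨d, hdK⟩
  have hed : e.symm (⟨d, hdK⟩, 0) = d := e.symm_apply_eq.2 (by ext <;> simp [e, hpd, hd])
  have hΦe : HasFDerivAt Φ (e : E →L[ℝ] K × A.range) x₀ := hΦ' x₀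
  obtain ⟨ξ, hξ0, hξd, hξ⟩ := hΦC.contDiffAt.exists_curve_map_eq_line hk hΦe (⟨d, hdK⟩, 0)
  have hker := (hh.continuous_fderiv hk').continuousAt.eventually_ker_comp_eq_ker π hπA
    (by simpa using hrank)
  have hker_t : ∀ᶠ t in 𝓝 0, (π ∘L fderiv ℝ h (ξ t)).ker = (fderiv ℝ h (ξ t)).ker :=
    (hξ0 ▸ hξd.continuousAt.tendsto).eventually hker
  obtain ⟨ε, hε, hball⟩ := Metric.eventually_nhds_iff_ball.1 (hξ.and hker_t)
  rw [Real.ball_eq_Ioo, zero_sub, zero_add] at hball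
  refine ⟨ε, hε, ξ, fun t ht ↦ (hball t ht).1.1.contDiffWithinAt, hξ0, hξd.deriv.trans hed,
    fun t ht ↦ hξ0 ▸ ?_⟩
  refine isOpen_Ioo.is_const_of_ker_comp_fderiv_eq isPreconnected_Ioo (hh.differentiable hk')
    (fun τ hτ ↦ ((hball τ hτ).1.1.differentiableAt hk').differentiableWithinAt)
    (c := π (h x₀)) (fun τ hτ ↦ ?_) (fun τ hτ ↦ (hball τ hτ).2) (by simpa using hε) ht
  simpa [Φ] using congrArg Prod.snd (hball τ hτ).1.2

end Curves

theorem Submodule.finrank_range_orthogonalProjectionOnto_comp {E F : Type*}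
    [NormedAddCommGroup E] [InnerProductSpace ℝ E] [FiniteDimensional ℝ E]
    [NormedAddCommGroup F] [InnerProductSpace ℝ F] [FiniteDimensional ℝ F]
    (W : Submodule ℝ F) (T : E →L[ℝ] F) :
    finrank ℝ (W.orthogonalProjectionOnto ∘L T).range =
      finrank ℝ (W.map (ContinuousLinearMap.adjoint T).toLinearMap) := by
  rw [← LinearMap.finrank_range_adjoint, ContinuousLinearMap.adjoint_toLinearMap,
    ContinuousLinearMap.adjoint_comp, Submodule.adjoint_orthogonalProjectionOnto,
    ContinuousLinearMap.toLinearMap_comp, LinearMap.range_comp, Submodule.toLinearMap_subtypeL,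
    Submodule.range_subtype]

theorem stmt_3 {n : ℕ} {𝔽 : Type*} [NormedAddCommGroup 𝔽] [InnerProductSpace ℝ 𝔽]
    [FiniteDimensional ℝ 𝔽]
    (G : EuclideanSpace ℝ (Fin n) → 𝔽) (hG : ContDiff ℝ 2 G)
    (W : Submodule ℝ 𝔽) (xb d : EuclideanSpace ℝ (Fin n))
    (hd : fderiv ℝ G xb d ∈ Wᗮ)
    (hcr : ∃ r : ℕ, ∀ᶠ x in nhds xb,
      finrank ℝ ↥(W.map (ContinuousLinearMap.adjoint (fderiv ℝ G x)).toLinearMap) = r) :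
    ∃ ε > (0 : ℝ), ∃ ξ : ℝ → EuclideanSpace ℝ (Fin n),
      ContDiffOn ℝ 2 ξ (Set.Ioo (-ε) ε) ∧ ξ 0 = xb ∧ deriv ξ 0 = d ∧
      ∀ t ∈ Set.Ioo (-ε) ε, ∀ V ∈ W, ⟪G (ξ t), V⟫ = ⟪G xb, V⟫ := by
  obtain ⟨r, hr⟩ := hcr
  have hG₂ : ContDiff ℝ (2 : ℕ) G := by exact_mod_cast hG
  set P := W.orthogonalProjectionOnto
  have hfderiv : ∀ x, fderiv ℝ (P ∘ G) x = P ∘L fderiv ℝ G x := fun x ↦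
    (P.hasFDerivAt.comp x (hG.differentiable two_ne_zero x).hasFDerivAt).fderiv
  have hrank : ∀ᶠ x in 𝓝 xb,
      finrank ℝ (fderiv ℝ (P ∘ G) x).range ≤ finrank ℝ (fderiv ℝ (P ∘ G) xb).range := by
    filter_upwards [hr] with x hx
    rw [hfderiv, hfderiv, Submodule.finrank_range_orthogonalProjectionOnto_comp,
      Submodule.finrank_range_orthogonalProjectionOnto_comp, hx, hr.self_of_nhds]
  have hPd : fderiv ℝ (P ∘ G) xb d = 0 := by
    rw [hfderiv, ContinuousLinearMap.comp_apply]
    exact Submodule.orthogonalProjectionOnto_apply_of_mem_orthogonal (K := W) hd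
  have hPG : ContDiff ℝ (2 : ℕ) (P ∘ G) := P.contDiff.comp hG₂
  obtain ⟨ε, hε, ξ, hξC, hξ0, hξd, hlevel⟩ :=
    ContDiff.exists_curve_of_finrank_range_fderiv_le two_ne_zero hPG hPd hrank
  refine ⟨ε, hε, ξ, by exact_mod_cast hξC, hξ0, hξd, fun t ht V hV ↦ ?_⟩
  calc ⟪G (ξ t), V⟫ = ⟪(P (G (ξ t)) : 𝔽), V⟫ :=
        (W.inner_orthogonalProjectionOnto_eq_of_mem_right ⟨V, hV⟩ _).symm
    _ = ⟪(P (G xb) : 𝔽), V⟫ := by rw [← comp_apply (f := P), hlevel t ht, comp_apply]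
    _ = ⟪G xb, V⟫ := W.inner_orthogonalProjectionOnto_eq_of_mem_right ⟨V, hV⟩ _
end

section
/- Let A : ℝⁿ → 𝔽 be a linear map, let C ⊆ 𝔽 be a nonempty closed convex cone, and let F be the minimal face of C containing the set A[A⁻¹(C)] = {Ad : d ∈ ℝⁿ, Ad ∈ C}. Then there exists d ∈ ℝⁿ with Ad ∈ C such that Ad ∈ ri(F). -/
open Set

/-- A face of a closed convex set `C`: a convex subset that is extreme in `C`. -/
def IsFace {𝔽 : Type*} [NormedAddCommGroup 𝔽] [InnerProductSpace ℝ 𝔽]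
    (C F : Set 𝔽) : Prop :=
  Convex ℝ F ∧ IsExtreme ℝ C F

/-- `F` is the minimal face of `C` containing `S`. -/
def IsMinimalFace {𝔽 : Type*} [NormedAddCommGroup 𝔽] [InnerProductSpace ℝ 𝔽]
    (C S F : Set 𝔽) : Prop :=
  IsFace C F ∧ S ⊆ F ∧ ∀ F' : Set 𝔽, IsFace C F' → S ⊆ F' → F ⊆ F'

/-!
The set `S = A[A⁻¹(C)]` is convex and contains `0`, so it has a point `x ∈ ri S`; we show
`ri S ⊆ ri F`. The points `y ∈ C` such that the segment from `y` through `x` can be prolonged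
beyond `x` inside `C` form a face of `C`; it contains `S` because `x ∈ ri S`, hence contains `F`.
Prolonging the segment from a point `w ∈ ri F` through `x` gives a point `p ∈ C`, which lies in `F`
since `F` is a face, and then `x ∈ ]p, w]` lies in `ri F`.
-/

section IntrinsicInterior

variable {E : Type*} [NormedAddCommGroup E] [NormedSpace ℝ E] {s : Set E} {x y : E}

theorem mem_intrinsicInterior_iff_dist :
    x ∈ intrinsicInterior ℝ s ↔ x ∈ affineSpan ℝ s ∧
      ∃ ε > (0 : ℝ), ∀ z ∈ (affineSpan ℝ s : Set E), dist z x < ε → z ∈ s := by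
  constructor
  · rintro ⟨y, hy, rfl⟩
    rw [mem_interior_iff_mem_nhds, Metric.mem_nhds_iff] at hy
    obtain ⟨ε, hε, hball⟩ := hy
    exact ⟨y.2, ε, hε, fun z hz hzy => hball (show (⟨z, hz⟩ : affineSpan ℝ s) ∈ _ from hzy)⟩
  · rintro ⟨hx, ε, hε, hball⟩
    refine ⟨⟨x, hx⟩, ?_, rfl⟩
    rw [mem_interior_iff_mem_nhds, Metric.mem_nhds_iff]
    exact ⟨ε, hε, fun z hz => hball z z.2 hz⟩

theorem exists_add_smul_sub_mem_of_mem_intrinsicInterior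
    (hx : x ∈ intrinsicInterior ℝ s) (hy : y ∈ s) : ∃ δ > (0 : ℝ), x + δ • (x - y) ∈ s := by
  obtain ⟨hxs, ε, hε, hball⟩ := mem_intrinsicInterior_iff_dist.1 hx
  have hnorm : 0 < ‖x - y‖ + 1 := by positivity
  set δ := ε / (‖x - y‖ + 1)
  have hδ : 0 < δ := by positivity
  refine ⟨δ, hδ, hball _ ?_ ?_⟩
  · simpa [vsub_eq_sub, vadd_eq_add, add_comm] using
      AffineSubspace.smul_vsub_vadd_mem _ δ hxs (subset_affineSpan ℝ s hy) hxs
  · calc dist (x + δ • (x - y)) x = δ * ‖x - y‖ := by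
          simp [dist_eq_norm, norm_smul, abs_of_pos hδ]
      _ < δ * (‖x - y‖ + 1) := by gcongr; linarith
      _ = ε := div_mul_cancel₀ ε hnorm.ne'

theorem Convex.add_smul_sub_mem_intrinsicInterior (hs : Convex ℝ s) {p w : E} (hp : p ∈ s)
    (hw : w ∈ intrinsicInterior ℝ s) {t : ℝ} (ht : t ∈ Ioc (0 : ℝ) 1) :
    p + t • (w - p) ∈ intrinsicInterior ℝ s := by
  obtain ⟨hws, ε, hε, hball⟩ := mem_intrinsicInterior_iff_dist.1 hw
  have hps := subset_affineSpan ℝ s hp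
  have ht0 : 0 < t := ht.1
  rw [mem_intrinsicInterior_iff_dist]
  refine ⟨by simpa [vsub_eq_sub, vadd_eq_add, add_comm] using
    AffineSubspace.smul_vsub_vadd_mem _ t hws hps hps, t * ε, by positivity, fun u hu hut => ?_⟩
  -- `u` is the image under the homothety of centre `p` and ratio `t` of a point `v` near `w`
  set v := p + t⁻¹ • (u - p)
  have hv : v ∈ s := by
    refine hball v ?_ ?_
    · simpa [vsub_eq_sub, vadd_eq_add, add_comm, v] using
        AffineSubspace.smul_vsub_vadd_mem _ t⁻¹ hu hps hps
    · have hvw : v - w = t⁻¹ • (u - (p + t • (w - p))) := by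
        rw [sub_add_eq_sub_sub, smul_sub, inv_smul_smul₀ ht0.ne']; simp only [v]; abel
      rw [dist_eq_norm] at hut ⊢
      rw [hvw, norm_smul, Real.norm_eq_abs, abs_of_pos (inv_pos.2 ht0)]
      calc t⁻¹ * ‖u - (p + t • (w - p))‖ < t⁻¹ * (t * ε) := by gcongr
        _ = ε := by field_simp
  have hu_eq : u = p + t • (v - p) := by
    rw [add_sub_cancel_left, smul_inv_smul₀ ht0.ne', add_sub_cancel]
  exact hu_eq ▸ hs.add_smul_sub_mem hp hv (Ioc_subset_Icc_self ht)

end IntrinsicInterior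

section FaceOfPoint

variable {E : Type*} [AddCommGroup E] [Module ℝ E] {C : Set E} {x y : E}

/-- For `x ∈ C`, the smallest face of `C` containing `x`. -/
def faceOfPoint (C : Set E) (x : E) : Set E :=
  {y ∈ C | ∃ ε > (0 : ℝ), x + ε • (x - y) ∈ C}

theorem faceOfPoint_subset : faceOfPoint C x ⊆ C := fun _ hy => hy.1

theorem Convex.add_smul_sub_mem_of_le (hC : Convex ℝ C) (hx : x ∈ C) {δ ε : ℝ}
    (hδ : 0 ≤ δ) (hδε : δ ≤ ε) (hε : x + ε • (x - y) ∈ C) : x + δ • (x - y) ∈ C := by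
  rcases hδ.eq_or_lt with rfl | hδ
  · simpa using hx
  have hε0 : 0 < ε := hδ.trans_le hδε
  have h := hC.add_smul_sub_mem hx hε ⟨div_nonneg hδ.le hε0.le, div_le_one_of_le₀ hδε hε0.le⟩
  rwa [add_sub_cancel_left, smul_smul, div_mul_cancel₀ δ hε0.ne'] at h

theorem convex_faceOfPoint (hC : Convex ℝ C) (hx : x ∈ C) : Convex ℝ (faceOfPoint C x) := by
  rintro y₁ ⟨hy₁, ε₁, hε₁, hp₁⟩ y₂ ⟨hy₂, ε₂, hε₂, hp₂⟩ a b ha hb hab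
  set ε := min ε₁ ε₂
  have hε : 0 < ε := lt_min hε₁ hε₂
  refine ⟨hC hy₁ hy₂ ha hb hab, ε, hε, ?_⟩
  have h₁ := hC.add_smul_sub_mem_of_le hx hε.le (min_le_left _ _) hp₁
  have h₂ := hC.add_smul_sub_mem_of_le hx hε.le (min_le_right _ _) hp₂
  convert hC h₁ h₂ ha hb hab using 1
  obtain rfl : b = 1 - a := by linarith
  match_scalars <;> ring

theorem isExtreme_faceOfPoint (hC : Convex ℝ C) : IsExtreme ℝ C (faceOfPoint C x) := by
  refine ⟨faceOfPoint_subset, ?_⟩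
  rintro x₁ hx₁ x₂ hx₂ y ⟨-, ε, hε, hp⟩ ⟨a, b, ha, hb, hab, rfl⟩
  have hεb : 0 < 1 + ε * b := by positivity
  refine ⟨hx₁, ε * a / (1 + ε * b), by positivity, ?_⟩
  -- the new point lies on the segment from `x + ε • (x - y)` to `x₂`
  have hsum : 1 / (1 + ε * b) + ε * b / (1 + ε * b) = 1 := by field_simp
  convert hC hp hx₂ (by positivity) (by positivity) hsum using 1
  obtain rfl : b = 1 - a := by linarith
  match_scalars <;> field_simp <;> ring

end FaceOfPoint

section Face

variable {E : Type*} [NormedAddCommGroup E] [NormedSpace ℝ E] {C F : Set E} {x : E}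

theorem subset_faceOfPoint_of_mem_intrinsicInterior (hFC : F ⊆ C)
    (hx : x ∈ intrinsicInterior ℝ F) : F ⊆ faceOfPoint C x := fun _ hy =>
  let ⟨δ, hδ, hxy⟩ := exists_add_smul_sub_mem_of_mem_intrinsicInterior hx hy
  ⟨hFC hy, δ, hδ, hFC hxy⟩

theorem mem_intrinsicInterior_of_subset_faceOfPoint [FiniteDimensional ℝ E] (hF : Convex ℝ F)
    (hFC : IsExtreme ℝ C F) (hx : x ∈ F) (hFx : F ⊆ faceOfPoint C x) :
    x ∈ intrinsicInterior ℝ F := by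
  obtain ⟨w, hw⟩ := Set.Nonempty.intrinsicInterior hF ⟨x, hx⟩
  obtain ⟨hwC, ε, hε, hpC⟩ := hFx (intrinsicInterior_subset hw)
  set p := x + ε • (x - w)
  have ht : ε / (1 + ε) ∈ Ioo (0 : ℝ) 1 :=
    ⟨by positivity, (div_lt_one (by positivity)).2 (by linarith)⟩
  have hx_eq : p + (ε / (1 + ε)) • (w - p) = x := by
    simp only [p]; match_scalars <;> field_simp <;> ring
  have hpF : p ∈ F := hFC.left_mem_of_mem_openSegment hpC hwC hx
    (openSegment_eq_image' ℝ p w ▸ ⟨_, ht, hx_eq⟩)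
  exact hx_eq ▸ hF.add_smul_sub_mem_intrinsicInterior hpF hw (Ioo_subset_Ioc_self ht)

end Face

theorem IsMinimalFace.intrinsicInterior_subset {𝔽 : Type*} [NormedAddCommGroup 𝔽]
    [InnerProductSpace ℝ 𝔽] [FiniteDimensional ℝ 𝔽] {C S F : Set 𝔽} (hF : IsMinimalFace C S F)
    (hC : Convex ℝ C) : intrinsicInterior ℝ S ⊆ intrinsicInterior ℝ F := by
  obtain ⟨⟨hFconv, hFC⟩, hSF, hmin⟩ := hF
  intro x hx
  have hxF : x ∈ F := hSF (_root_.intrinsicInterior_subset hx)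
  have hFx : F ⊆ faceOfPoint C x :=
    hmin _ ⟨convex_faceOfPoint hC (hFC.subset hxF), isExtreme_faceOfPoint hC⟩
      (subset_faceOfPoint_of_mem_intrinsicInterior (hSF.trans hFC.subset) hx)
  exact mem_intrinsicInterior_of_subset_faceOfPoint hFconv hFC hxF hFx

theorem stmt_4_general {n : ℕ} {𝔽 : Type*} [NormedAddCommGroup 𝔽] [InnerProductSpace ℝ 𝔽]
    [FiniteDimensional ℝ 𝔽]
    (A : EuclideanSpace ℝ (Fin n) →ₗ[ℝ] 𝔽)
    (C : Set 𝔽) (hCne : C.Nonempty) (hCconv : Convex ℝ C)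
    (hCcone : ∀ c : ℝ, 0 ≤ c → ∀ x ∈ C, c • x ∈ C)
    (F : Set 𝔽) (hF : IsMinimalFace C (A '' (A ⁻¹' C)) F) :
    ∃ d : EuclideanSpace ℝ (Fin n), A d ∈ C ∧ A d ∈ intrinsicInterior ℝ F := by
  have h0C : (0 : 𝔽) ∈ C := by
    obtain ⟨c, hc⟩ := hCne
    simpa using hCcone 0 le_rfl c hc
  have hSconv : Convex ℝ (A '' (A ⁻¹' C)) := (hCconv.linear_preimage A).linear_image A
  obtain ⟨x, hx⟩ := Set.Nonempty.intrinsicInterior hSconv ⟨0, 0, by simpa using h0C, map_zero A⟩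
  obtain ⟨d, hdC, rfl⟩ := intrinsicInterior_subset hx
  exact ⟨d, hdC, hF.intrinsicInterior_subset hCconv hx⟩

theorem stmt_4 {n : ℕ} {𝔽 : Type*} [NormedAddCommGroup 𝔽] [InnerProductSpace ℝ 𝔽]
    [FiniteDimensional ℝ 𝔽]
    (A : EuclideanSpace ℝ (Fin n) →ₗ[ℝ] 𝔽)
    (C : Set 𝔽) (hCne : C.Nonempty) (hCcl : IsClosed C) (hCconv : Convex ℝ C)
    (hCcone : ∀ c : ℝ, 0 ≤ c → ∀ x ∈ C, c • x ∈ C)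
    (F : Set 𝔽) (hF : IsMinimalFace C (A '' (A ⁻¹' C)) F) :
    ∃ d : EuclideanSpace ℝ (Fin n), A d ∈ C ∧ A d ∈ intrinsicInterior ℝ F :=
  stmt_4_general A C hCne hCconv hCcone F hF
end

section
/- Let f : ℝⁿ → ℝ and G : ℝⁿ → 𝔽 be twice continuously differentiable, C ⊆ 𝔽 a nonempty closed convex cone, x̄ ∈ ℝⁿ with G(x̄) = 0. Let F be the minimal face of C containing Γ = DG(x̄)[L(x̄)], where L(x̄) = {d ∈ ℝⁿ : DG(x̄)d ∈ C}. Assume there is a neighborhood V of x̄ such that for every face F′ of C with F′ ⊆ F, the dimension of DG(x)*[F′⊥] is the same for all x ∈ V (Strong-CRSC). Then for every d ∈ ℝⁿ with DG(x̄)d ∈ C and ⟨∇f(x̄), d⟩ = 0, and any two multipliers Ȳ₁, Ȳ₂ ∈ C° satisfying −∇f(x̄) = DG(x̄)*[Ȳ₁] = DG(x̄)*[Ȳ₂], one has ⟨D²G(x̄)[d, d], Ȳ₁⟩ = ⟨D²G(x̄)[d, d], Ȳ₂⟩; that is, the second-order term is independent of the choice of Lagrange multiplier. -/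
open Set Module RealInnerProductSpace

/-- The polar cone of `C`. -/
def polarCone {𝔽 : Type*} [NormedAddCommGroup 𝔽] [InnerProductSpace ℝ 𝔽]
    (C : Set 𝔽) : Set 𝔽 :=
  {y | ∀ x ∈ C, ⟪y, x⟫ ≤ (0 : ℝ)}

/-!
The difference `Y = Ȳ₁ - Ȳ₂` of two multipliers lies in the kernel of `DG(x̄)*`. Both
multipliers vanish on `z = DG(x̄) d` (because `⟨∇f(x̄), d⟩ = 0`), hence on the minimal face `F'`
of `C` containing `z`, which lies in `F`; so `Y ∈ W := F'⊥` and `W ⊥ z`. Constant rank of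
`x ↦ DG(x)*|_W` near `x̄` lets us write `DG(x)* Y = ∑ cᵢ(x) DG(x)* wᵢ` with fixed `wᵢ ∈ W` and
coefficients `cᵢ(x) → 0`. Hence `ψ(x) = ⟨Y, DG(x) d⟩ = ∑ cᵢ(x) ⟨wᵢ, DG(x) d⟩` is a sum of
products of `o(1)` and `O(‖x - x̄‖)` terms, so `Dψ(x̄) = 0`; but `Dψ(x̄) d = ⟨Y, D²G(x̄)[d, d]⟩`.
-/

open Filter Topology Matrix
open ContinuousLinearMap (adjoint adjoint_inner_left)

section Faces

variable {𝔽 : Type*} [NormedAddCommGroup 𝔽] [InnerProductSpace ℝ 𝔽] {C : Set 𝔽}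

theorem isMinimalFace_sInter (hC : Convex ℝ C) {S : Set 𝔽} (hS : S ⊆ C) :
    IsMinimalFace C S (⋂₀ {F | IsFace C F ∧ S ⊆ F}) := by
  have hne : {F | IsFace C F ∧ S ⊆ F}.Nonempty := ⟨C, ⟨hC, IsExtreme.rfl⟩, hS⟩
  exact ⟨⟨convex_sInter fun F hF => hF.1.1, isExtreme_sInter hne fun F hF => hF.1.2⟩,
    subset_sInter fun F hF => hF.2, fun F hF hSF => sInter_subset_of_mem ⟨hF, hSF⟩⟩

theorem isFace_setOf_inner_eq_zero (hC : Convex ℝ C) {Y : 𝔽} (hY : Y ∈ polarCone C) :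
    IsFace C {u ∈ C | ⟪Y, u⟫ = 0} := by
  refine ⟨?_, fun u hu => hu.1, ?_⟩
  · intro x hx y hy a b ha hb hab
    refine ⟨hC hx.1 hy.1 ha hb hab, ?_⟩
    simp [inner_add_right, real_inner_smul_right, hx.2, hy.2]
  · rintro x₁ hx₁ x₂ hx₂ x hx ⟨a, b, ha, hb, hab, rfl⟩
    have h₁ := hY x₁ hx₁
    have h₂ := hY x₂ hx₂
    have h : a * ⟪Y, x₁⟫ + b * ⟪Y, x₂⟫ = 0 := by
      simpa [inner_add_right, real_inner_smul_right] using hx.2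
    exact ⟨hx₁, by nlinarith⟩

theorem mem_orthogonal_span_of_isMinimalFace (hC : Convex ℝ C) {S F : Set 𝔽}
    (hF : IsMinimalFace C S F) {Y : 𝔽} (hY : Y ∈ polarCone C) (hYS : ∀ s ∈ S, ⟪Y, s⟫ = 0) :
    Y ∈ (Submodule.span ℝ F)ᗮ := by
  have hFY : F ⊆ {u ∈ C | ⟪Y, u⟫ = 0} :=
    hF.2.2 _ (isFace_setOf_inner_eq_zero hC hY) fun s hs => ⟨hF.1.2.subset (hF.2.1 hs), hYS s hs⟩
  have hspan : Submodule.span ℝ F ≤ LinearMap.ker (innerₛₗ ℝ Y) :=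
    Submodule.span_le.mpr fun u hu => (hFY hu).2
  exact (Submodule.mem_orthogonal' _ _).mpr fun u hu => hspan hu

end Faces

section Gram

variable {E : Type*} [NormedAddCommGroup E] [InnerProductSpace ℝ E] {ι : Type*} [Fintype ι]

theorem gram_mulVec_apply (v : ι → E) (a : ι → ℝ) (j : ι) :
    (gram ℝ v *ᵥ a) j = ⟪v j, ∑ i, a i • v i⟫ := by
  simp [mulVec, dotProduct, inner_sum, real_inner_smul_right, mul_comm]

omit [Fintype ι] in
theorem continuous_gram : Continuous (gram ℝ : (ι → E) → Matrix ι ι ℝ) :=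
  continuous_matrix fun i j => (continuous_apply i).inner (continuous_apply j)

/-- The coefficients are `(gram (v x))⁻¹ *ᵥ (⟪v x j, u x⟫)ⱼ`. -/
theorem exists_tendsto_coeffs_of_linearIndependent [DecidableEq ι] {X : Type*} {l : Filter X}
    {v : X → ι → E} {v₀ : ι → E} {u : X → E} (hv : Tendsto v l (𝓝 v₀))
    (hv₀ : LinearIndependent ℝ v₀) (hu : Tendsto u l (𝓝 0))
    (hspan : ∀ᶠ x in l, u x ∈ Submodule.span ℝ (range (v x))) :
    ∃ c : X → ι → ℝ, (∀ᶠ x in l, u x = ∑ i, c x i • v x i) ∧ Tendsto c l (𝓝 0) := by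
  refine ⟨fun x => (gram ℝ (v x))⁻¹ *ᵥ fun j => ⟪v x j, u x⟫, ?_, ?_⟩
  · filter_upwards [hspan, hv.eventually hv₀.eventually] with x hx hind
    obtain ⟨a, ha⟩ := (Submodule.mem_span_range_iff_exists_fun ℝ).mp hx
    have hunit : IsUnit (gram ℝ (v x)).det :=
      isUnit_iff_ne_zero.mpr (det_gram_ne_zero_iff_linearIndependent.mpr hind)
    have hgram : (fun j => ⟪v x j, ∑ i, a i • v x i⟫) = gram ℝ (v x) *ᵥ a :=
      funext fun j => (gram_mulVec_apply _ _ j).symm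
    rw [← ha, hgram, mulVec_mulVec, nonsing_inv_mul _ hunit, one_mulVec]
  · have hdet : (gram ℝ v₀).det ≠ 0 := det_gram_ne_zero_iff_linearIndependent.mpr hv₀
    have hinv : Tendsto (fun x => (gram ℝ (v x))⁻¹) l (𝓝 (gram ℝ v₀)⁻¹) :=
      (continuousAt_matrix_inv _ (NormedRing.inverse_continuousAt (Units.mk0 _ hdet))).tendsto.comp
        (continuous_gram.tendsto v₀ |>.comp hv)
    have hinner : Tendsto (fun x j => ⟪v x j, u x⟫) l (𝓝 0) := by
      refine tendsto_pi_nhds.mpr fun j => ?_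
      simpa using ((continuous_apply j).tendsto v₀ |>.comp hv).inner hu
    simpa [Function.comp_def] using ((continuous_fst.matrix_mulVec continuous_snd).tendsto _).comp
      (hinv.prodMk_nhds hinner)

end Gram

section ConstantRank

variable {E 𝔽 : Type*} [NormedAddCommGroup E] [InnerProductSpace ℝ E]
  [NormedAddCommGroup 𝔽] [InnerProductSpace ℝ 𝔽]

theorem HasFDerivAt.inner_const_clm_apply {T : E → E →L[ℝ] 𝔽} {T' : E →L[ℝ] E →L[ℝ] 𝔽} {x₀ : E}
    (hT : HasFDerivAt T T' x₀) (w : 𝔽) (d : E) :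
    HasFDerivAt (fun x => ⟪w, T x d⟫)
      ((innerSL ℝ w).comp ((ContinuousLinearMap.apply ℝ 𝔽 d).comp T')) x₀ :=
  (innerSL ℝ w).hasFDerivAt.comp x₀ ((ContinuousLinearMap.apply ℝ 𝔽 d).hasFDerivAt.comp x₀ hT)

theorem inner_fderiv_apply_eq_zero_of_finrank_map_adjoint_eventuallyEq [CompleteSpace E]
    [FiniteDimensional ℝ 𝔽] {T : E → E →L[ℝ] 𝔽} {T' : E →L[ℝ] E →L[ℝ] 𝔽} {x₀ : E}
    (hT : HasFDerivAt T T' x₀) {W : Submodule ℝ 𝔽}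
    (hrank : ∀ᶠ x in 𝓝 x₀, finrank ℝ (W.map (adjoint (T x)).toLinearMap) =
      finrank ℝ (W.map (adjoint (T x₀)).toLinearMap))
    {Y : 𝔽} (hYW : Y ∈ W) (hY : adjoint (T x₀) Y = 0) {d : E} (hWd : ∀ w ∈ W, ⟪w, T x₀ d⟫ = 0)
    (h : E) : ⟪Y, T' h d⟫ = 0 := by
  classical
  set S := fun x => W.map (adjoint (T x)).toLinearMap
  let b := Module.finBasis ℝ (S x₀)
  choose w hwW hwb using fun i => Submodule.mem_map.mp (b i).2
  set v : E → Fin (finrank ℝ (S x₀)) → E := fun x i => adjoint (T x) (w i)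
  have hadj : Tendsto (fun x => adjoint (T x)) (𝓝 x₀) (𝓝 (adjoint (T x₀))) :=
    (adjoint.continuous.tendsto _).comp hT.continuousAt.tendsto
  have hv : Tendsto v (𝓝 x₀) (𝓝 (v x₀)) := tendsto_pi_nhds.mpr fun i =>
    ((ContinuousLinearMap.apply ℝ E (w i)).continuous.tendsto _).comp hadj
  have hv₀ : LinearIndependent ℝ (v x₀) := by
    have : v x₀ = fun i => (b i : E) := funext hwb
    rw [this]
    exact b.linearIndependent.map' (S x₀).subtype (Submodule.ker_subtype _)
  have hspan : ∀ᶠ x in 𝓝 x₀, adjoint (T x) Y ∈ Submodule.span ℝ (range (v x)) := by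
    filter_upwards [hrank, hv.eventually hv₀.eventually] with x hx hind
    have hle : Submodule.span ℝ (range (v x)) ≤ S x :=
      Submodule.span_le.mpr (range_subset_iff.mpr fun i => Submodule.mem_map_of_mem (hwW i))
    rw [Submodule.eq_of_le_of_finrank_eq hle
      (by rw [finrank_span_eq_card hind, hx, Fintype.card_fin])]
    exact Submodule.mem_map_of_mem hYW
  have hu : Tendsto (fun x => adjoint (T x) Y) (𝓝 x₀) (𝓝 0) := by
    simpa [hY, Function.comp_def] using
      ((ContinuousLinearMap.apply ℝ E Y).continuous.tendsto _).comp hadj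
  obtain ⟨c, hc, hc₀⟩ := exists_tendsto_coeffs_of_linearIndependent hv hv₀ hu hspan
  have hψ : (fun x => ⟪Y, T x d⟫) =ᶠ[𝓝 x₀] fun x => ∑ i, c x i * ⟪w i, T x d⟫ := by
    filter_upwards [hc] with x hx
    rw [← adjoint_inner_left, hx, sum_inner]
    simp [v, real_inner_smul_left, adjoint_inner_left]
  have hγ : ∀ i, (fun x => ⟪w i, T x d⟫) =O[𝓝 x₀] (· - x₀) := fun i => by
    simpa [hWd _ (hwW i)] using (hT.inner_const_clm_apply (w i) d).isBigO_sub
  have hψo : (fun x => ⟪Y, T x d⟫) =o[𝓝 x₀] (· - x₀) := by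
    refine (Asymptotics.IsLittleO.fun_sum fun i _ => ?_).congr' hψ.symm EventuallyEq.rfl
    refine Asymptotics.isLittleO_norm_right.mp ?_
    simpa using ((Asymptotics.isLittleO_one_iff ℝ).mpr
      (((continuous_apply i).tendsto 0).comp hc₀)).mul_isBigO (hγ i).norm_right
  have hψ₀ : ⟪Y, T x₀ d⟫ = 0 := by
    rw [← adjoint_inner_left, hY, inner_zero_left]
  have h0 : HasFDerivAt (fun x => ⟪Y, T x d⟫) (0 : E →L[ℝ] ℝ) x₀ :=
    hasFDerivAt_iff_isLittleO.mpr (by simpa [hψ₀] using hψo)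
  simpa using congr($((hT.inner_const_clm_apply Y d).unique h0) h)

end ConstantRank

theorem stmt_11_general {n : ℕ} {𝔽 : Type*} [NormedAddCommGroup 𝔽] [InnerProductSpace ℝ 𝔽]
    [FiniteDimensional ℝ 𝔽]
    (f : EuclideanSpace ℝ (Fin n) → ℝ)
    (G : EuclideanSpace ℝ (Fin n) → 𝔽) (hG : ContDiff ℝ 2 G)
    (C : Set 𝔽) (hCconv : Convex ℝ C)
    (xb : EuclideanSpace ℝ (Fin n))
    (L : Set (EuclideanSpace ℝ (Fin n))) (hL : L = {d | fderiv ℝ G xb d ∈ C})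
    (F : Set 𝔽) (hF : IsMinimalFace C (fderiv ℝ G xb '' L) F)
    (V : Set (EuclideanSpace ℝ (Fin n))) (hV : V ∈ nhds xb)
    (hSCRSC : ∀ F' : Set 𝔽, IsFace C F' → F' ⊆ F → ∃ r : ℕ, ∀ x ∈ V,
      finrank ℝ ↥(((Submodule.span ℝ F')ᗮ).map
        (ContinuousLinearMap.adjoint (fderiv ℝ G x)).toLinearMap) = r) :
    ∀ d : EuclideanSpace ℝ (Fin n), fderiv ℝ G xb d ∈ C →
      ⟪gradient f xb, d⟫ = (0 : ℝ) →
      ∀ Yb₁ ∈ polarCone C, ∀ Yb₂ ∈ polarCone C,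
        -gradient f xb = ContinuousLinearMap.adjoint (fderiv ℝ G xb) Yb₁ →
        -gradient f xb = ContinuousLinearMap.adjoint (fderiv ℝ G xb) Yb₂ →
        ⟪fderiv ℝ (fderiv ℝ G) xb d d, Yb₁⟫ = (⟪fderiv ℝ (fderiv ℝ G) xb d d, Yb₂⟫ : ℝ) := by
  intro d hd hgd Y₁ hY₁ Y₂ hY₂ hadj₁ hadj₂
  set z := fderiv ℝ G xb d
  obtain ⟨F', hF'⟩ : ∃ F', IsMinimalFace C {z} F' :=
    ⟨_, isMinimalFace_sInter hCconv (singleton_subset_iff.mpr hd)⟩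
  have hF'F : F' ⊆ F :=
    hF'.2.2 F hF.1 (singleton_subset_iff.mpr (hF.2.1 ⟨d, hL ▸ hd, rfl⟩))
  obtain ⟨r, hr⟩ := hSCRSC F' hF'.1 hF'F
  have hYz : ∀ Y, -gradient f xb = adjoint (fderiv ℝ G xb) Y →
      ∀ s ∈ ({z} : Set 𝔽), ⟪Y, s⟫ = 0 := by
    rintro Y hY s rfl
    rw [← adjoint_inner_left, ← hY, inner_neg_left, hgd, neg_zero]
  have hYW : Y₁ - Y₂ ∈ (Submodule.span ℝ F')ᗮ :=
    Submodule.sub_mem _ (mem_orthogonal_span_of_isMinimalFace hCconv hF' hY₁ (hYz Y₁ hadj₁))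
      (mem_orthogonal_span_of_isMinimalFace hCconv hF' hY₂ (hYz Y₂ hadj₂))
  have hD2G : HasFDerivAt (fderiv ℝ G) (fderiv ℝ (fderiv ℝ G) xb) xb :=
    ((hG.fderiv_right le_rfl).differentiable one_ne_zero xb).hasFDerivAt
  have key := inner_fderiv_apply_eq_zero_of_finrank_map_adjoint_eventuallyEq hD2G
    (eventually_of_mem hV fun x hx => (hr x hx).trans (hr xb (mem_of_mem_nhds hV)).symm) hYW
    (by rw [map_sub, ← hadj₁, ← hadj₂, sub_self])
    (fun w hw => Submodule.inner_left_of_mem_orthogonal (Submodule.subset_span (hF'.2.1 rfl)) hw) d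
  rw [real_inner_comm Y₁, real_inner_comm Y₂, ← sub_eq_zero, ← inner_sub_left]
  exact key

theorem stmt_11 {n : ℕ} {𝔽 : Type*} [NormedAddCommGroup 𝔽] [InnerProductSpace ℝ 𝔽]
    [FiniteDimensional ℝ 𝔽]
    (f : EuclideanSpace ℝ (Fin n) → ℝ) (hf : ContDiff ℝ 2 f)
    (G : EuclideanSpace ℝ (Fin n) → 𝔽) (hG : ContDiff ℝ 2 G)
    (C : Set 𝔽) (hCne : C.Nonempty) (hCcl : IsClosed C) (hCconv : Convex ℝ C)
    (hCcone : ∀ c : ℝ, 0 ≤ c → ∀ x ∈ C, c • x ∈ C)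
    (xb : EuclideanSpace ℝ (Fin n)) (hxb : G xb = 0)
    (L : Set (EuclideanSpace ℝ (Fin n))) (hL : L = {d | fderiv ℝ G xb d ∈ C})
    (F : Set 𝔽) (hF : IsMinimalFace C (fderiv ℝ G xb '' L) F)
    (V : Set (EuclideanSpace ℝ (Fin n))) (hV : V ∈ nhds xb)
    (hSCRSC : ∀ F' : Set 𝔽, IsFace C F' → F' ⊆ F → ∃ r : ℕ, ∀ x ∈ V,
      finrank ℝ ↥(((Submodule.span ℝ F')ᗮ).map
        (ContinuousLinearMap.adjoint (fderiv ℝ G x)).toLinearMap) = r) :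
    ∀ d : EuclideanSpace ℝ (Fin n), fderiv ℝ G xb d ∈ C →
      ⟪gradient f xb, d⟫ = (0 : ℝ) →
      ∀ Yb₁ ∈ polarCone C, ∀ Yb₂ ∈ polarCone C,
        -gradient f xb = ContinuousLinearMap.adjoint (fderiv ℝ G xb) Yb₁ →
        -gradient f xb = ContinuousLinearMap.adjoint (fderiv ℝ G xb) Yb₂ →
        ⟪fderiv ℝ (fderiv ℝ G) xb d d, Yb₁⟫ = (⟪fderiv ℝ (fderiv ℝ G) xb d d, Yb₂⟫ : ℝ) :=
  stmt_11_general f G hG C hCconv xb L hL F hF V hV hSCRSC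
end

section
/- Let f : ℝⁿ → ℝ and G : ℝⁿ → 𝔽 be twice continuously differentiable, C ⊆ 𝔽 a nonempty closed convex cone, and x̄ ∈ ℝⁿ with G(x̄) = 0. If the rank of DG(x) is the same for all x in some neighborhood of x̄, then for every d ∈ ℝⁿ with DG(x̄)d = 0 and any two multipliers Ȳ₁, Ȳ₂ ∈ C° satisfying −∇f(x̄) = DG(x̄)*[Ȳ₁] = DG(x̄)*[Ȳ₂], one has ⟨D²G(x̄)[d, d], Ȳ₁⟩ = ⟨D²G(x̄)[d, d], Ȳ₂⟩. -/
open Set Module RealInnerProductSpace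

/-!
Since `DG(x̄)* Ȳ₁ = DG(x̄)* Ȳ₂`, the difference `Ȳ₁ - Ȳ₂` is orthogonal to `range DG(x̄)`, so
it suffices that `D²G(x̄)[d, d] ∈ range DG(x̄)`. Under constant rank, every `d ∈ ker DG(x̄)`
extends to a differentiable field `c` with `c x̄ = d` and `DG(x) (c x) = 0` near `x̄`: subtract
from `d` the element of `(ker DG(x̄))ᗮ` with the same image under `DG(x)`, which exists because
`DG(x)` stays injective on `(ker DG(x̄))ᗮ` and has the same rank as `DG(x̄)`. Differentiating
`DG(x) (c x) = 0` at `x̄` in direction `d` gives `D²G(x̄)[d, d] = -DG(x̄) (Dc(x̄) d)`.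
-/

open Filter Topology ContinuousLinearMap

theorem ContinuousLinearMap.IsInvertible.eventually_isInvertible {E F : Type*}
    [NormedAddCommGroup E] [NormedSpace ℝ E] [CompleteSpace E]
    [NormedAddCommGroup F] [NormedSpace ℝ F] {T : E →L[ℝ] F} (hT : T.IsInvertible) :
    ∀ᶠ S in 𝓝 T, S.IsInvertible := by
  obtain ⟨e, rfl⟩ := hT
  exact e.nhds

theorem ContinuousLinearMap.isInvertible_of_injective_of_finrank_eq {E F : Type*}
    [NormedAddCommGroup E] [NormedSpace ℝ E] [FiniteDimensional ℝ E]
    [NormedAddCommGroup F] [NormedSpace ℝ F] [FiniteDimensional ℝ F] {T : E →L[ℝ] F}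
    (hinj : Function.Injective T) (hdim : finrank ℝ E = finrank ℝ F) : T.IsInvertible :=
  ⟨(T.toLinearMap.linearEquivOfInjective hinj hdim).toContinuousLinearEquiv, rfl⟩

theorem LinearMap.finrank_orthogonal_ker {E V : Type*}
    [NormedAddCommGroup E] [InnerProductSpace ℝ E] [FiniteDimensional ℝ E]
    [AddCommGroup V] [Module ℝ V] (f : E →ₗ[ℝ] V) :
    finrank ℝ (LinearMap.ker f)ᗮ = finrank ℝ (LinearMap.range f) := by
  have := (LinearMap.ker f).finrank_add_finrank_orthogonal
  have := f.finrank_range_add_finrank_ker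
  omega

theorem LinearMap.injective_domRestrict_orthogonal_ker {E V : Type*}
    [NormedAddCommGroup E] [InnerProductSpace ℝ E]
    [AddCommGroup V] [Module ℝ V] (f : E →ₗ[ℝ] V) :
    Function.Injective (f.domRestrict (LinearMap.ker f)ᗮ) :=
  LinearMap.injective_domRestrict_iff.mpr (LinearMap.ker f).orthogonal_disjoint.symm

section ConstantRank

variable {E F : Type*}
  [NormedAddCommGroup E] [InnerProductSpace ℝ E] [FiniteDimensional ℝ E]
  [NormedAddCommGroup F] [InnerProductSpace ℝ F]

/-- Invertible at `T = T₀`, hence for all `T` near `T₀`. -/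
noncomputable def compressToRange (T₀ T : E →L[ℝ] F) :
    (LinearMap.ker T₀.toLinearMap)ᗮ →L[ℝ] LinearMap.range T₀.toLinearMap :=
  (LinearMap.range T₀.toLinearMap).orthogonalProjectionOnto ∘L T ∘L
    (LinearMap.ker T₀.toLinearMap)ᗮ.subtypeL

theorem isInvertible_compressToRange_self (T₀ : E →L[ℝ] F) :
    (compressToRange T₀ T₀).IsInvertible := by
  refine isInvertible_of_injective_of_finrank_eq (fun x y hxy => ?_)
    (LinearMap.finrank_orthogonal_ker T₀.toLinearMap)
  apply LinearMap.injective_domRestrict_orthogonal_ker T₀.toLinearMap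
  have hproj (z : E) : (LinearMap.range T₀.toLinearMap).orthogonalProjectionOnto (T₀ z) =
      ⟨T₀ z, LinearMap.mem_range_self _ z⟩ :=
    Submodule.orthogonalProjectionOnto_mem_subspace_eq_self ⟨T₀ z, LinearMap.mem_range_self _ z⟩
  simpa [compressToRange, hproj, Subtype.ext_iff] using hxy

noncomputable def kerCorrection (T₀ T : E →L[ℝ] F) (x : E) : E :=
  x - ((compressToRange T₀ T).inverse
    ((LinearMap.range T₀.toLinearMap).orthogonalProjectionOnto (T x)) : E)

theorem kerCorrection_self {T₀ : E →L[ℝ] F} {x : E} (hx : T₀ x = 0) :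
    kerCorrection T₀ T₀ x = x := by
  simp [kerCorrection, hx]

theorem apply_kerCorrection {T₀ T : E →L[ℝ] F} (hT : (compressToRange T₀ T).IsInvertible)
    (hrank : finrank ℝ (LinearMap.range T.toLinearMap) =
      finrank ℝ (LinearMap.range T₀.toLinearMap))
    (x : E) :
    T (kerCorrection T₀ T x) = 0 := by
  set L := (LinearMap.ker T₀.toLinearMap)ᗮ
  set g := T.toLinearMap.domRestrict L
  have hg : Function.Injective g := fun y z hyz => by
    apply hT.injective
    simp only [compressToRange, coe_comp, Function.comp_apply]
    exact congrArg _ hyz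
  have hrange : LinearMap.range g = LinearMap.range T.toLinearMap := by
    refine Submodule.eq_of_le_of_finrank_le (LinearMap.range_domRestrict_le_range _ _) ?_
    rw [LinearMap.finrank_range_of_inj hg, hrank, LinearMap.finrank_orthogonal_ker]
  obtain ⟨w, hw⟩ : T x ∈ LinearMap.range g := hrange ▸ LinearMap.mem_range_self _ x
  have hinv : (compressToRange T₀ T).inverse
      ((LinearMap.range T₀.toLinearMap).orthogonalProjectionOnto (T x)) = w := by
    rw [hT.inverse_apply_eq, ← hw]
    rfl
  rw [kerCorrection, hinv, map_sub, ← hw, sub_eq_zero]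
  rfl

theorem differentiable_compressToRange (T₀ : E →L[ℝ] F) :
    Differentiable ℝ (compressToRange T₀) :=
  (differentiable_const _).clm_comp (differentiable_fun_id.clm_comp (differentiable_const _))

theorem differentiableAt_kerCorrection (T₀ : E →L[ℝ] F) (x : E) :
    DifferentiableAt ℝ (fun T => kerCorrection T₀ T x) T₀ := by
  have hinverse : DifferentiableAt ℝ (fun T => (compressToRange T₀ T).inverse) T₀ :=
    ((isInvertible_compressToRange_self T₀).contDiffAt_map_inverse.differentiableAt
      one_ne_zero).comp T₀ (differentiable_compressToRange T₀ T₀)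
  have hval : Differentiable ℝ ((↑) : (LinearMap.ker T₀.toLinearMap)ᗮ → E) :=
    (Submodule.subtypeL _).differentiable
  unfold kerCorrection
  fun_prop

theorem HasFDerivAt.apply_apply_mem_range_of_eventually_finrank_eq {X : Type*}
    [NormedAddCommGroup X] [NormedSpace ℝ X] {Φ : X → E →L[ℝ] F} {Φ' : X →L[ℝ] E →L[ℝ] F}
    {x₀ : X} (hΦ : HasFDerivAt Φ Φ' x₀)
    (hrank : ∀ᶠ x in 𝓝 x₀, finrank ℝ (LinearMap.range (Φ x).toLinearMap) =
      finrank ℝ (LinearMap.range (Φ x₀).toLinearMap))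
    {d : E} (hd : Φ x₀ d = 0) (v : X) :
    Φ' v d ∈ LinearMap.range (Φ x₀).toLinearMap := by
  set c : X → E := fun y => kerCorrection (Φ x₀) (Φ y) d
  have hc : HasFDerivAt c (fderiv ℝ c x₀) x₀ :=
    ((differentiableAt_kerCorrection (Φ x₀) d).comp x₀ hΦ.differentiableAt).hasFDerivAt
  have hinvertible : ∀ᶠ y in 𝓝 x₀, (compressToRange (Φ x₀) (Φ y)).IsInvertible :=
    ((differentiable_compressToRange (Φ x₀)).continuous.continuousAt.comp
      hΦ.continuousAt).eventually
        (isInvertible_compressToRange_self (Φ x₀)).eventually_isInvertible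
  have hzero : (fun y => Φ y (c y)) =ᶠ[𝓝 x₀] fun _ => 0 := by
    filter_upwards [hinvertible, hrank] with y hy hy'
    exact apply_kerCorrection hy hy' d
  have hderiv := (hΦ.clm_apply hc).unique ((hasFDerivAt_const 0 x₀).congr_of_eventuallyEq hzero)
  have hc₀ : c x₀ = d := kerCorrection_self hd
  have hv := congrArg (· v) hderiv
  simp only [comp_apply, add_apply, flip_apply, zero_apply, hc₀] at hv
  exact ⟨-(fderiv ℝ c x₀ v), by simp [eq_neg_of_add_eq_zero_left hv]⟩

end ConstantRank

theorem ContinuousLinearMap.inner_eq_inner_of_mem_range_of_adjoint_eq {E F : Type*}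
    [NormedAddCommGroup E] [InnerProductSpace ℝ E] [CompleteSpace E]
    [NormedAddCommGroup F] [InnerProductSpace ℝ F] [CompleteSpace F] {T : E →L[ℝ] F} {y : F}
    (hy : y ∈ LinearMap.range T.toLinearMap) {Y₁ Y₂ : F} (hY : adjoint T Y₁ = adjoint T Y₂) :
    ⟪y, Y₁⟫ = ⟪y, Y₂⟫ := by
  obtain ⟨z, rfl⟩ := hy
  rw [coe_coe, ← adjoint_inner_right, hY, adjoint_inner_right]

theorem stmt_12_general {n : ℕ} {𝔽 : Type*} [NormedAddCommGroup 𝔽] [InnerProductSpace ℝ 𝔽]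
    [FiniteDimensional ℝ 𝔽]
    (f : EuclideanSpace ℝ (Fin n) → ℝ)
    (G : EuclideanSpace ℝ (Fin n) → 𝔽) (hG : ContDiff ℝ 2 G)
    (C : Set 𝔽)
    (xb : EuclideanSpace ℝ (Fin n))
    (hcr : ∃ r : ℕ, ∀ᶠ x in nhds xb,
      finrank ℝ ↥(LinearMap.range (fderiv ℝ G x).toLinearMap) = r) :
    ∀ d : EuclideanSpace ℝ (Fin n), fderiv ℝ G xb d = 0 →
      ∀ Yb₁ ∈ polarCone C, ∀ Yb₂ ∈ polarCone C,
        -gradient f xb = ContinuousLinearMap.adjoint (fderiv ℝ G xb) Yb₁ →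
        -gradient f xb = ContinuousLinearMap.adjoint (fderiv ℝ G xb) Yb₂ →
        ⟪fderiv ℝ (fderiv ℝ G) xb d d, Yb₁⟫ = (⟪fderiv ℝ (fderiv ℝ G) xb d d, Yb₂⟫ : ℝ) := by
  intro d hd Yb₁ _ Yb₂ _ h₁ h₂
  obtain ⟨r, hr⟩ := hcr
  have hrank : ∀ᶠ x in 𝓝 xb, finrank ℝ (LinearMap.range (fderiv ℝ G x).toLinearMap) =
      finrank ℝ (LinearMap.range (fderiv ℝ G xb).toLinearMap) := by
    filter_upwards [hr] with x hx
    rw [hx, hr.self_of_nhds]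
  have hD2G : HasFDerivAt (fderiv ℝ G) (fderiv ℝ (fderiv ℝ G) xb) xb :=
    ((hG.fderiv_right (m := 1) le_rfl).differentiable one_ne_zero xb).hasFDerivAt
  exact inner_eq_inner_of_mem_range_of_adjoint_eq
    (hD2G.apply_apply_mem_range_of_eventually_finrank_eq hrank hd d) (h₁.symm.trans h₂)

theorem stmt_12 {n : ℕ} {𝔽 : Type*} [NormedAddCommGroup 𝔽] [InnerProductSpace ℝ 𝔽]
    [FiniteDimensional ℝ 𝔽]
    (f : EuclideanSpace ℝ (Fin n) → ℝ) (hf : ContDiff ℝ 2 f)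
    (G : EuclideanSpace ℝ (Fin n) → 𝔽) (hG : ContDiff ℝ 2 G)
    (C : Set 𝔽) (hCne : C.Nonempty) (hCcl : IsClosed C) (hCconv : Convex ℝ C)
    (hCcone : ∀ c : ℝ, 0 ≤ c → ∀ x ∈ C, c • x ∈ C)
    (xb : EuclideanSpace ℝ (Fin n)) (hxb : G xb = 0)
    (hcr : ∃ r : ℕ, ∀ᶠ x in nhds xb,
      finrank ℝ ↥(LinearMap.range (fderiv ℝ G x).toLinearMap) = r) :
    ∀ d : EuclideanSpace ℝ (Fin n), fderiv ℝ G xb d = 0 →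
      ∀ Yb₁ ∈ polarCone C, ∀ Yb₂ ∈ polarCone C,
        -gradient f xb = ContinuousLinearMap.adjoint (fderiv ℝ G xb) Yb₁ →
        -gradient f xb = ContinuousLinearMap.adjoint (fderiv ℝ G xb) Yb₂ →
        ⟪fderiv ℝ (fderiv ℝ G) xb d d, Yb₁⟫ = (⟪fderiv ℝ (fderiv ℝ G) xb d d, Yb₂⟫ : ℝ) :=
  stmt_12_general f G hG C xb hcr
end

section
/- Let ζ_1, …, ζ_s : ℝⁿ → ℝ be continuously differentiable functions and x̄ ∈ ℝⁿ be such that ζ_i(x̄) = 0 for every i = 1, …, s. Assume the dimension of the span of {∇ζ_1(x), …, ∇ζ_s(x)} is the same for all x in some neighborhood of x̄, and that there exists γ ∈ ℝˢ with γ_i > 0 for all i such that Σ_{i=1}^{s} γ_i ∇ζ_i(x̄) = 0. Then there exists a neighborhood U of x̄ such that for every x ∈ U, if ζ_i(x) ≥ 0 for all i = 1, …, s, then ζ_i(x) = 0 for all i = 1, …, s. -/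
/-!
Put `g = ∑ i, γ i * ζ i` and let `Φ` collect those `ζ i` whose gradients at `x̄` form a basis of
the span of all gradients there. Then `dΦ(x̄)` is onto and `dg(x̄) = 0`, and by constant rank
`ker dΦ(x) ⊆ ker dg(x)` near `x̄`. Straightening `Φ` into a coordinate projection shows that `g`
is locally a function of `Φ` with vanishing derivative at `0`, so `g = o(‖Φ‖)`. On the other hand,
if all `ζ i ≥ 0` then `g ≥ (min γ) ‖Φ‖`, which forces `Φ = 0` and then `g = 0`, i.e. all `ζ i = 0`.
-/

open Set Module Submodule Filter Topology Asymptotics RealInnerProductSpace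

universe u

theorem eventually_apply_eq_apply_fst_of_fderiv_comp_inr_eq_zero
    {F K H : Type*} [NormedAddCommGroup F] [NormedSpace ℝ F] [NormedAddCommGroup K]
    [NormedSpace ℝ K] [NormedAddCommGroup H] [NormedSpace ℝ H] {h : F × K → H} {p : F × K}
    (hh : ∀ᶠ y in 𝓝 p,
      DifferentiableAt ℝ h y ∧ (fderiv ℝ h y).comp (ContinuousLinearMap.inr ℝ F K) = 0) :
    ∀ᶠ y in 𝓝 p, h y = h (y.1, p.2) := by
  obtain ⟨δ, hδ, hball⟩ := Metric.eventually_nhds_iff_ball.mp hh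
  rw [← ball_prod_same] at hball
  filter_upwards [prod_mem_nhds (Metric.ball_mem_nhds p.1 hδ) (Metric.ball_mem_nhds p.2 hδ)]
    with y ⟨hy₁, hy₂⟩
  have hslice : ∀ v ∈ Metric.ball p.2 δ, (y.1, v) ∈ Metric.ball p.1 δ ×ˢ Metric.ball p.2 δ :=
    fun v hv => ⟨hy₁, hv⟩
  have hderiv : ∀ v ∈ Metric.ball p.2 δ, HasFDerivAt (fun w => h (y.1, w)) (0 : K →L[ℝ] H) v := by
    intro v hv
    obtain ⟨hdiff, hzero⟩ := hball _ (hslice v hv)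
    have := hdiff.hasFDerivAt.comp v (hasFDerivAt_prodMk_right y.1 v)
    rwa [hzero] at this
  refine (convex_ball p.2 δ).is_const_of_fderivWithin_eq_zero (f := fun w => h (y.1, w))
    (fun v hv => (hderiv v hv).differentiableAt.differentiableWithinAt) (fun v hv => ?_)
    hy₂ (Metric.mem_ball_self hδ)
  rw [fderivWithin_of_isOpen Metric.isOpen_ball hv]
  exact (hderiv v hv).fderiv

section

variable {E F H : Type*} [NormedAddCommGroup E] [NormedSpace ℝ E] [NormedAddCommGroup F]
  [NormedSpace ℝ F] [NormedAddCommGroup H] [NormedSpace ℝ H] {Φ : E → F} {g : E → H} {x₀ : E}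

theorem eventually_comp_eq_comp_fst_of_ker_fderiv_le {K : Type*} [NormedAddCommGroup K]
    [NormedSpace ℝ K] {ψ : F × K → E} {p : F × K}
    (hψ : ∀ᶠ y in 𝓝 p, DifferentiableAt ℝ ψ y) (hψp : Tendsto ψ (𝓝 p) (𝓝 x₀))
    (hΦψ : ∀ᶠ y in 𝓝 p, Φ (ψ y) = y.1) (hΦ : ∀ᶠ x in 𝓝 x₀, DifferentiableAt ℝ Φ x)
    (hg : ∀ᶠ x in 𝓝 x₀, DifferentiableAt ℝ g x)
    (hker : ∀ᶠ x in 𝓝 x₀, (fderiv ℝ Φ x).ker ≤ (fderiv ℝ g x).ker) :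
    ∀ᶠ y in 𝓝 p, g (ψ y) = g (ψ (y.1, p.2)) := by
  refine eventually_apply_eq_apply_fst_of_fderiv_comp_inr_eq_zero (h := g ∘ ψ) ?_
  filter_upwards [hψ, hΦψ.eventually_nhds, hψp.eventually (hΦ.and (hg.and hker))]
    with y hψy hΦψy ⟨hΦy, hgy, hkery⟩
  have hfst : (fderiv ℝ Φ (ψ y)).comp (fderiv ℝ ψ y) = ContinuousLinearMap.fst ℝ F K :=
    (hΦy.hasFDerivAt.comp y hψy.hasFDerivAt).unique (hasFDerivAt_fst.congr_of_eventuallyEq hΦψy)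
  refine ⟨hgy.comp y hψy, ?_⟩
  ext w
  rw [fderiv_comp y hgy hψy]
  refine hkery ?_
  simpa using congr($hfst (0, w))

theorem exists_differentiableAt_eventuallyEq_comp_of_ker_fderiv_le [FiniteDimensional ℝ E]
    [CompleteSpace F] (hΦ : ContDiffAt ℝ 1 Φ x₀) (hg : ∀ᶠ x in 𝓝 x₀, DifferentiableAt ℝ g x)
    (hsurj : (fderiv ℝ Φ x₀).range = ⊤)
    (hker : ∀ᶠ x in 𝓝 x₀, (fderiv ℝ Φ x).ker ≤ (fderiv ℝ g x).ker) :
    ∃ G : F → H, DifferentiableAt ℝ G (Φ x₀) ∧ g =ᶠ[𝓝 x₀] G ∘ Φ := by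
  set K := (fderiv ℝ Φ x₀).ker
  obtain ⟨P, hP⟩ := Submodule.ClosedComplemented.of_finiteDimensional K
  have hPrange : (P : E →ₗ[ℝ] K).range = ⊤ :=
    LinearMap.range_eq_top.mpr fun v => ⟨v, hP v⟩
  let e : E ≃L[ℝ] F × K := (fderiv ℝ Φ x₀).equivProdOfSurjectiveOfIsCompl P hsurj hPrange
    (LinearMap.isCompl_of_proj (f := (P : E →ₗ[ℝ] K)) hP)
  -- `χ = (Φ, P)` is a local chart around `x₀` in which `Φ` becomes the first projection
  let χ : E → F × K := fun x => (Φ x, P x)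
  have hχ : ContDiffAt ℝ 1 χ x₀ := hΦ.prodMk P.contDiff.contDiffAt
  have hχ' : HasFDerivAt χ (e : E →L[ℝ] F × K) x₀ :=
    (hΦ.differentiableAt one_ne_zero).hasFDerivAt.prodMk P.hasFDerivAt
  have hstrict := hχ.hasStrictFDerivAt' hχ' one_ne_zero
  set ψ := hχ.localInverse hχ' one_ne_zero
  have hψx₀ : ψ (χ x₀) = x₀ := hχ.localInverse_apply_image hχ' one_ne_zero
  have hψ : ContDiffAt ℝ 1 ψ (χ x₀) := hχ.to_localInverse hχ' one_ne_zero
  have hψ_tendsto : Tendsto ψ (𝓝 (χ x₀)) (𝓝 x₀) := by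
    simpa only [hψx₀] using hψ.continuousAt.tendsto
  have hfiber : ∀ᶠ y in 𝓝 (χ x₀), g (ψ y) = g (ψ (y.1, P x₀)) :=
    eventually_comp_eq_comp_fst_of_ker_fderiv_le
      (hψ.eventually (by simp) |>.mono fun y hy => hy.differentiableAt one_ne_zero) hψ_tendsto
      (hstrict.eventually_right_inverse.mono fun y hy => congrArg Prod.fst hy)
      (hΦ.eventually (by simp) |>.mono fun x hx => hx.differentiableAt one_ne_zero) hg hker
  refine ⟨fun u => g (ψ (u, P x₀)), ?_, ?_⟩
  · have hgx₀ : DifferentiableAt ℝ g (ψ (χ x₀)) := by rw [hψx₀]; exact hg.self_of_nhds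
    exact hgx₀.comp (Φ x₀) ((hψ.differentiableAt one_ne_zero).comp (Φ x₀)
      (hasFDerivAt_prodMk_left (Φ x₀) (P x₀)).differentiableAt)
  · have hleft : ∀ᶠ x in 𝓝 x₀, ψ (χ x) = x := hstrict.eventually_left_inverse
    filter_upwards [hleft, hχ.continuousAt.eventually hfiber] with x hψχ hx
    simp only [Function.comp_apply]
    rw [← hx, hψχ]

theorem isLittleO_sub_of_ker_fderiv_le [FiniteDimensional ℝ E] [CompleteSpace F]
    (hΦ : ContDiffAt ℝ 1 Φ x₀) (hg : ∀ᶠ x in 𝓝 x₀, DifferentiableAt ℝ g x)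
    (hsurj : (fderiv ℝ Φ x₀).range = ⊤)
    (hker : ∀ᶠ x in 𝓝 x₀, (fderiv ℝ Φ x).ker ≤ (fderiv ℝ g x).ker)
    (hdg : fderiv ℝ g x₀ = 0) :
    (fun x => g x - g x₀) =o[𝓝 x₀] fun x => Φ x - Φ x₀ := by
  obtain ⟨G, hG, hgG⟩ := exists_differentiableAt_eventuallyEq_comp_of_ker_fderiv_le hΦ hg hsurj hker
  have hdG : fderiv ℝ G (Φ x₀) = 0 := by
    have hchain : HasFDerivAt g ((fderiv ℝ G (Φ x₀)).comp (fderiv ℝ Φ x₀)) x₀ :=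
      (hG.hasFDerivAt.comp x₀ (hΦ.differentiableAt one_ne_zero).hasFDerivAt).congr_of_eventuallyEq
        hgG
    ext u
    obtain ⟨v, rfl⟩ := LinearMap.range_eq_top.mp hsurj u
    simpa [hdg] using congr($(hchain.fderiv) v).symm
  have hGo := (hdG ▸ hG.hasFDerivAt).isLittleO.comp_tendsto (hΦ.continuousAt.tendsto)
  simp only [zero_apply, sub_zero] at hGo
  refine hGo.congr' ?_ EventuallyEq.rfl
  filter_upwards [hgG] with x hx
  simp [hx, hgG.self_of_nhds]

end

theorem surjective_inner_of_linearIndependent {E κ : Type*} [NormedAddCommGroup E]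
    [InnerProductSpace ℝ E] [Finite κ] {u : κ → E} (hu : LinearIndependent ℝ u) :
    Function.Surjective fun v : E => fun j => ⟪u j, v⟫ := by
  let T : E →ₗ[ℝ] κ → ℝ := LinearMap.pi fun j => innerₗ E (u j)
  have hinj : LinearMap.ker (LinearMap.ltoFun ℝ E ℝ ℝ ∘ₗ innerₗ E) = ⊥ := by
    refine LinearMap.ker_eq_bot'.2 fun w hw => ?_
    simpa using congr_fun hw w
  have htop := span_flip_eq_top_iff_linearIndependent.2 (hu.map' _ hinj)
  change span ℝ (LinearMap.range T : Set (κ → ℝ)) = ⊤ at htop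
  rw [span_eq] at htop
  exact LinearMap.range_eq_top.1 htop

theorem eventually_span_range_comp_eq {X V ι κ : Type*} [TopologicalSpace X]
    [NormedAddCommGroup V] [NormedSpace ℝ V] [FiniteDimensional ℝ V] [Fintype κ]
    {u : X → ι → V} {x₀ : X} (hu : ∀ i, ContinuousAt (fun x => u x i) x₀) (a : κ → ι)
    (hind : LinearIndependent ℝ (u x₀ ∘ a))
    (hrank : ∀ᶠ x in 𝓝 x₀, finrank ℝ (span ℝ (range (u x))) = Fintype.card κ) :
    ∀ᶠ x in 𝓝 x₀, span ℝ (range (u x ∘ a)) = span ℝ (range (u x)) := by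
  have hind' : ∀ᶠ x in 𝓝 x₀, LinearIndependent ℝ (u x ∘ a) :=
    (tendsto_pi_nhds.2 fun j => (hu (a j)).tendsto).eventually hind.eventually
  filter_upwards [hind', hrank] with x hx hr
  refine Submodule.eq_of_le_of_finrank_le (span_mono (range_comp_subset_range a (u x))) ?_
  rw [hr, finrank_span_eq_card hx]

section Gradient

variable {E ι : Type*} [NormedAddCommGroup E] [InnerProductSpace ℝ E] [CompleteSpace E]
  {ζ : ι → E → ℝ} {x : E}

theorem fderiv_pi_apply_eq_inner (hx : ∀ i, DifferentiableAt ℝ (ζ i) x) (v : E) :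
    fderiv ℝ (fun y i => ζ i y) x v = fun i => ⟪gradient (ζ i) x, v⟫ := by
  rw [(hasFDerivAt_pi.2 fun i => (hx i).hasFDerivAt).fderiv]
  ext i
  exact InnerProductSpace.toDual_symm_apply.symm

theorem fderiv_sum_mul_apply_eq_inner [Fintype ι] (γ : ι → ℝ)
    (hx : ∀ i, DifferentiableAt ℝ (ζ i) x) (v : E) :
    fderiv ℝ (fun y => ∑ i, γ i * ζ i y) x v = ⟪∑ i, γ i • gradient (ζ i) x, v⟫ := by
  rw [(HasFDerivAt.fun_sum fun i _ => (hx i).hasFDerivAt.const_mul (γ i)).fderiv]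
  simp only [sum_apply, smul_apply, smul_eq_mul, sum_inner, real_inner_smul_left,
    InnerProductSpace.toDual_symm_apply, gradient]

theorem ker_fderiv_pi_le_ker_fderiv_sum_mul [Fintype ι] {κ : Type*} [Fintype κ] (a : κ → ι)
    (γ : ι → ℝ) (hx : ∀ i, DifferentiableAt ℝ (ζ i) x)
    (hspan : span ℝ (range fun j => gradient (ζ (a j)) x) =
      span ℝ (range fun i => gradient (ζ i) x)) :
    (fderiv ℝ (fun y j => ζ (a j) y) x).ker ≤ (fderiv ℝ (fun y => ∑ i, γ i * ζ i y) x).ker := by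
  intro v hv
  have hv : ∀ j, ⟪gradient (ζ (a j)) x, v⟫ = 0 := fun j =>
    congr_fun ((fderiv_pi_apply_eq_inner (fun j => hx (a j)) v).symm.trans hv) j
  have hperp : span ℝ (range fun j => gradient (ζ (a j)) x) ⟂ span ℝ {v} := by
    refine isOrtho_span.2 ?_
    rintro _ ⟨j, rfl⟩ _ rfl
    exact hv j
  rw [LinearMap.mem_ker, ContinuousLinearMap.coe_coe, fderiv_sum_mul_apply_eq_inner γ hx]
  exact hperp.inner_eq (hspan ▸ sum_mem fun i _ => smul_mem _ _ (subset_span ⟨i, rfl⟩))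
    (mem_span_singleton_self v)

end Gradient

theorem exists_isLittleO_sum_mul_of_finrank_span_gradient_eq {E : Type*} {ι : Type u}
    [NormedAddCommGroup E] [InnerProductSpace ℝ E] [FiniteDimensional ℝ E] [Fintype ι]
    {ζ : ι → E → ℝ} {x₀ : E} (hζ : ∀ i, ContDiffAt ℝ 1 (ζ i) x₀) (hζ₀ : ∀ i, ζ i x₀ = 0)
    (hrank : ∃ r : ℕ, ∀ᶠ x in 𝓝 x₀, finrank ℝ (span ℝ (range fun i => gradient (ζ i) x)) = r)
    {γ : ι → ℝ} (hsum : ∑ i, γ i • gradient (ζ i) x₀ = 0) :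
    ∃ (κ : Type u) (_ : Fintype κ) (a : κ → ι),
      (fun x => ∑ i, γ i * ζ i x) =o[𝓝 x₀] fun x j => ζ (a j) x := by
  obtain ⟨r, hr⟩ := hrank
  obtain ⟨κ, a, ha, hspan, hind⟩ := exists_linearIndependent' ℝ fun i => gradient (ζ i) x₀
  have : Fintype κ := Fintype.ofInjective a ha
  have hcard : Fintype.card κ = r := by
    rw [← finrank_span_eq_card hind, hspan, hr.self_of_nhds]
  have hgrad : ∀ i, ContinuousAt (fun x => gradient (ζ i) x) x₀ := fun i =>
    (InnerProductSpace.toDual ℝ E).symm.continuous.continuousAt.comp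
      ((hζ i).fderiv_right (m := 0) le_rfl).continuousAt
  have hdiff : ∀ᶠ x in 𝓝 x₀, ∀ i, DifferentiableAt ℝ (ζ i) x := eventually_all.2 fun i =>
    ((hζ i).eventually (by simp)).mono fun x hx => hx.differentiableAt one_ne_zero
  have hsurj : (fderiv ℝ (fun x j => ζ (a j) x) x₀).range = ⊤ := by
    refine LinearMap.range_eq_top.2 ?_
    convert surjective_inner_of_linearIndependent hind using 1
    ext v : 1
    exact fderiv_pi_apply_eq_inner (fun j => hdiff.self_of_nhds (a j)) v
  have hker : ∀ᶠ x in 𝓝 x₀, (fderiv ℝ (fun x j => ζ (a j) x) x).ker ≤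
      (fderiv ℝ (fun x => ∑ i, γ i * ζ i x) x).ker := by
    filter_upwards [hdiff, eventually_span_range_comp_eq hgrad a hind (hcard ▸ hr)]
      with x hx hxspan
    exact ker_fderiv_pi_le_ker_fderiv_sum_mul a γ hx hxspan
  have hdg : fderiv ℝ (fun x => ∑ i, γ i * ζ i x) x₀ = 0 := by
    ext v
    rw [fderiv_sum_mul_apply_eq_inner γ hdiff.self_of_nhds, hsum, inner_zero_left]
    rfl
  refine ⟨κ, this, a, ?_⟩
  have ho := isLittleO_sub_of_ker_fderiv_le (contDiffAt_pi.2 fun j => hζ (a j))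
    (hdiff.mono fun x hx => (DifferentiableAt.fun_sum fun i _ => (hx i).const_mul (γ i)))
    hsurj hker hdg
  rw [show (fun j => ζ (a j) x₀) = 0 from funext fun j => hζ₀ (a j)] at ho
  simpa [hζ₀] using ho

theorem eq_zero_of_sum_mul_le_half_norm {ι κ : Type*} [Fintype ι] [Fintype κ] {y γ : ι → ℝ}
    {c : ℝ} (hy : ∀ i, 0 ≤ y i) (hc : 0 < c) (hcγ : ∀ i, c ≤ γ i) (a : κ → ι)
    (h : ∑ i, γ i * y i ≤ c / 2 * ‖fun j => y (a j)‖) (i : ι) : y i = 0 := by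
  have hterm : ∀ i, 0 ≤ γ i * y i := fun i => mul_nonneg (hc.le.trans (hcγ i)) (hy i)
  set M := ‖fun j => y (a j)‖
  have hM : M ≤ M / 2 := by
    refine (pi_norm_le_iff_of_nonneg (by positivity)).2 fun j => ?_
    rw [Real.norm_of_nonneg (hy _)]
    have : c * y (a j) ≤ c * (M / 2) := calc
      c * y (a j) ≤ γ (a j) * y (a j) := mul_le_mul_of_nonneg_right (hcγ _) (hy _)
      _ ≤ ∑ i, γ i * y i := Finset.single_le_sum (fun i _ => hterm i) (Finset.mem_univ _)
      _ ≤ c * (M / 2) := by linarith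
    exact le_of_mul_le_mul_left this hc
  have hsum : ∑ i, γ i * y i = 0 :=
    le_antisymm (h.trans (by nlinarith)) (Finset.sum_nonneg fun i _ => hterm i)
  have := (Finset.sum_eq_zero_iff_of_nonneg fun i _ => hterm i).1 hsum i (Finset.mem_univ i)
  exact (mul_eq_zero.1 this).resolve_left (hc.trans_le (hcγ i)).ne'

theorem eventually_forall_eq_zero_of_forall_nonneg {E ι : Type*} [NormedAddCommGroup E]
    [InnerProductSpace ℝ E] [FiniteDimensional ℝ E] [Fintype ι] {ζ : ι → E → ℝ} {x₀ : E}
    (hζ : ∀ i, ContDiffAt ℝ 1 (ζ i) x₀) (hζ₀ : ∀ i, ζ i x₀ = 0)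
    (hrank : ∃ r : ℕ, ∀ᶠ x in 𝓝 x₀, finrank ℝ (span ℝ (range fun i => gradient (ζ i) x)) = r)
    {γ : ι → ℝ} (hγ : ∀ i, 0 < γ i) (hsum : ∑ i, γ i • gradient (ζ i) x₀ = 0) :
    ∀ᶠ x in 𝓝 x₀, (∀ i, 0 ≤ ζ i x) → ∀ i, ζ i x = 0 := by
  obtain ⟨κ, _, a, ho⟩ := exists_isLittleO_sum_mul_of_finrank_span_gradient_eq hζ hζ₀ hrank hsum
  obtain ⟨c, hc, hcγ⟩ : ∃ c > 0, ∀ i, c ≤ γ i := by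
    rcases isEmpty_or_nonempty ι with _ | _
    · exact ⟨1, one_pos, isEmptyElim⟩
    · obtain ⟨i₀, hi₀⟩ := Finite.exists_min γ
      exact ⟨γ i₀, hγ i₀, hi₀⟩
  filter_upwards [ho.def (half_pos hc)] with x hx hnonneg
  exact eq_zero_of_sum_mul_le_half_norm hnonneg hc hcγ a ((le_abs_self _).trans hx)

theorem stmt_13 {n s : ℕ} (ζ : Fin s → EuclideanSpace ℝ (Fin n) → ℝ)
    (hζ : ∀ i, ContDiff ℝ 1 (ζ i))
    (xb : EuclideanSpace ℝ (Fin n)) (hζ0 : ∀ i, ζ i xb = 0)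
    (hcr : ∃ r : ℕ, ∀ᶠ x in nhds xb,
      finrank ℝ ↥(Submodule.span ℝ (Set.range fun i => gradient (ζ i) x)) = r)
    (γ : Fin s → ℝ) (hγ : ∀ i, 0 < γ i)
    (hsum : ∑ i, γ i • gradient (ζ i) xb = 0) :
    ∃ U ∈ nhds xb, ∀ x ∈ U, (∀ i, 0 ≤ ζ i x) → ∀ i, ζ i x = 0 :=
  (eventually_forall_eq_zero_of_forall_nonneg (fun i => (hζ i).contDiffAt) hζ0 hcr hγ
    hsum).exists_mem
end

section
/- Let C ⊆ 𝔽 be a closed convex cone whose linear span has dimension s ≥ 1, and let Y ∈ ri(C) with Y ≠ 0. Then there exist linearly independent vectors η_1, …, η_s ∈ C and scalars α_1, …, α_s > 0 such that Y = Σ_{i=1}^{s} α_i η_i. -/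
open Set Module Filter Topology

/-!
Extend `Y` to a basis `Y = w₀, w₁, …, wₙ` of `span C` by vectors of `C`. The vectors
`Y + t wᵢ` (`i ≥ 1`) lie in the cone, and because `Y` is a relative interior point and `span C`
is the direction of `affineSpan C`, so does `Y - t ∑ᵢ wᵢ` for small `t > 0`. These `n + 1`
vectors sum to `(n + 1) Y`, and they span the same space as the `wᵢ` (recover `Y` from their sum,
then each `wᵢ`), hence are linearly independent.
-/

theorem Convex.add_mem_of_smul_mem {𝕜 E : Type*} [Field 𝕜] [LinearOrder 𝕜]
    [IsStrictOrderedRing 𝕜] [AddCommGroup E] [Module 𝕜 E] {C : Set E} (hC : Convex 𝕜 C)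
    (hcone : ∀ c : 𝕜, 0 ≤ c → ∀ x ∈ C, c • x ∈ C) {x y : E} (hx : x ∈ C) (hy : y ∈ C) :
    x + y ∈ C := by
  have hmid : (2⁻¹ : 𝕜) • x + (2⁻¹ : 𝕜) • y ∈ C :=
    hC hx hy (by positivity) (by positivity) (by norm_num)
  convert hcone 2 zero_le_two _ hmid using 1
  simp only [smul_add, smul_smul, mul_inv_cancel₀ (two_ne_zero' 𝕜), one_smul]

theorem direction_affineSpan_of_zero_mem {k V : Type*} [Ring k] [AddCommGroup V] [Module k V]
    {C : Set V} (h : (0 : V) ∈ C) : (affineSpan k C).direction = Submodule.span k C := by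
  rw [direction_affineSpan, vectorSpan_eq_span_vsub_set_right k h]
  simp

theorem eventually_add_smul_mem_of_mem_intrinsicInterior {𝕜 V : Type*} [Ring 𝕜]
    [TopologicalSpace 𝕜] [AddCommGroup V] [TopologicalSpace V] [Module 𝕜 V] [ContinuousAdd V]
    [ContinuousSMul 𝕜 V] {C : Set V} {y w : V} (hy : y ∈ intrinsicInterior 𝕜 C)
    (hw : w ∈ (affineSpan 𝕜 C).direction) : ∀ᶠ t in 𝓝 (0 : 𝕜), y + t • w ∈ C := by
  obtain ⟨p, hp, rfl⟩ := mem_intrinsicInterior.1 hy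
  let f : 𝕜 → affineSpan 𝕜 C := fun t ↦
    ⟨p + t • w, by
      rw [add_comm]
      exact AffineSubspace.vadd_mem_of_mem_direction (Submodule.smul_mem _ t hw) p.2⟩
  have hf : Continuous f := by fun_prop
  have hf0 : f 0 = p := by simp [f]
  have := hf.continuousAt.preimage_mem_nhds (hf0 ▸ isOpen_interior.mem_nhds hp)
  filter_upwards [this] with t ht using (interior_subset ht : f t ∈ (↑) ⁻¹' C)

theorem exists_linearIndependent_fin_mem {K V : Type*} [DivisionRing K] [AddCommGroup V]
    [Module K V] [FiniteDimensional K V] {C : Set V} {y : V} (hy : y ∈ C) (hy0 : y ≠ 0) {n : ℕ}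
    (hn : finrank K (Submodule.span K C) = n + 1) :
    ∃ w : Fin (n + 1) → V, w 0 = y ∧ (∀ i, w i ∈ C) ∧ LinearIndependent K w := by
  obtain ⟨b, hbC, hyb, hCb, hb⟩ := exists_linearIndepOn_extension (K := K) (v := id)
    ((linearIndepOn_singleton_iff K).2 hy0) (singleton_subset_iff.2 hy)
  rw [image_id, image_id] at hCb
  replace hb : LinearIndependent K ((↑) : b → V) := hb
  have := hb.setFinite.fintype
  have hcard : Fintype.card b = n + 1 := by
    rw [← hn, ← finrank_span_eq_card hb, Subtype.range_coe,
      le_antisymm (Submodule.span_mono hbC) (Submodule.span_le.2 hCb)]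
  let e : Fin (n + 1) ≃ b := (Fintype.equivFinOfCardEq hcard).symm
  let e' := (Equiv.swap 0 (e.symm ⟨y, hyb rfl⟩)).trans e
  exact ⟨fun i ↦ e' i, by simp [e'], fun i ↦ hbC (e' i).2, hb.comp _ e'.injective⟩

section Spread

variable {K V : Type*} [Field K] [AddCommGroup V] [Module K V] {n : ℕ}

noncomputable def spreadFamily (w : Fin (n + 1) → V) (t : K) : Fin (n + 1) → V :=
  Fin.cons (w 0 - t • ∑ i : Fin n, w i.succ) fun i : Fin n ↦ w 0 + t • w i.succ

theorem sum_spreadFamily (w : Fin (n + 1) → V) (t : K) :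
    ∑ i, spreadFamily w t i = (n + 1) • w 0 := by
  simp only [spreadFamily, Fin.sum_univ_succ, Fin.cons_zero, Fin.cons_succ,
    Finset.sum_add_distrib, Finset.sum_const, Finset.card_univ, Fintype.card_fin,
    ← Finset.smul_sum]
  rw [succ_nsmul']
  abel

theorem inv_smul_sum_spreadFamily [CharZero K] (w : Fin (n + 1) → V) (t : K) :
    ((n : K) + 1)⁻¹ • ∑ i, spreadFamily w t i = w 0 := by
  rw [sum_spreadFamily, ← Nat.cast_smul_eq_nsmul K, Nat.cast_succ, smul_smul,
    inv_mul_cancel₀ (Nat.cast_add_one_ne_zero n), one_smul]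

theorem span_range_spreadFamily [CharZero K] (w : Fin (n + 1) → V) {t : K} (ht : t ≠ 0) :
    Submodule.span K (range (spreadFamily w t)) = Submodule.span K (range w) := by
  set S := Submodule.span K (range (spreadFamily w t))
  have hmem : ∀ i, spreadFamily w t i ∈ S := fun i ↦ Submodule.subset_span (mem_range_self i)
  have hw : ∀ i, w i ∈ Submodule.span K (range w) :=
    fun i ↦ Submodule.subset_span (mem_range_self i)
  have h0 : w 0 ∈ S := by
    rw [← inv_smul_sum_spreadFamily w t]
    exact Submodule.smul_mem _ _ (Submodule.sum_mem _ fun i _ ↦ hmem i)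
  apply le_antisymm <;> rw [Submodule.span_le, range_subset_iff]
  · refine Fin.cases ?_ fun i ↦ ?_ <;> simp only [spreadFamily, Fin.cons_zero, Fin.cons_succ]
    · exact sub_mem (hw 0) (Submodule.smul_mem _ _ (Submodule.sum_mem _ fun i _ ↦ hw _))
    · exact add_mem (hw 0) (Submodule.smul_mem _ _ (hw _))
  · refine Fin.cases h0 fun i ↦ ?_
    have : w i.succ = t⁻¹ • (spreadFamily w t i.succ - w 0) := by
      simp [spreadFamily, smul_smul, inv_mul_cancel₀ ht]
    rw [SetLike.mem_coe, this]
    exact Submodule.smul_mem _ _ (sub_mem (hmem _) h0)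

theorem LinearIndependent.spreadFamily [CharZero K] {w : Fin (n + 1) → V}
    (hw : LinearIndependent K w) {t : K} (ht : t ≠ 0) :
    LinearIndependent K (spreadFamily w t) := by
  rw [linearIndependent_iff_card_eq_finrank_span, Set.finrank, span_range_spreadFamily w ht,
    ← Set.finrank, ← linearIndependent_iff_card_eq_finrank_span]
  exact hw

theorem spreadFamily_mem [LinearOrder K] [IsStrictOrderedRing K] {C : Set V}
    (hC : Convex K C) (hcone : ∀ c : K, 0 ≤ c → ∀ x ∈ C, c • x ∈ C) {w : Fin (n + 1) → V}
    (hw : ∀ i, w i ∈ C) {t : K} (ht : 0 ≤ t) (h0 : w 0 - t • ∑ i : Fin n, w i.succ ∈ C) :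
    ∀ i, spreadFamily w t i ∈ C :=
  Fin.cases h0 fun _ ↦ hC.add_mem_of_smul_mem hcone (hw 0) (hcone t ht _ (hw _))

end Spread

theorem stmt_14_general {𝔽 : Type*} [NormedAddCommGroup 𝔽] [InnerProductSpace ℝ 𝔽]
    [FiniteDimensional ℝ 𝔽]
    (C : Set 𝔽) (hCconv : Convex ℝ C)
    (hCcone : ∀ c : ℝ, 0 ≤ c → ∀ x ∈ C, c • x ∈ C)
    (s : ℕ) (hs : s = finrank ℝ ↥(Submodule.span ℝ C)) (hs1 : 1 ≤ s)
    (Y : 𝔽) (hY : Y ∈ intrinsicInterior ℝ C) (hY0 : Y ≠ 0) :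
    ∃ η : Fin s → 𝔽, (∀ i, η i ∈ C) ∧ LinearIndependent ℝ η ∧
      ∃ α : Fin s → ℝ, (∀ i, 0 < α i) ∧ Y = ∑ i, α i • η i := by
  obtain ⟨n, rfl⟩ : ∃ n, s = n + 1 := ⟨s - 1, by omega⟩
  have hYC : Y ∈ C := intrinsicInterior_subset hY
  have h0C : (0 : 𝔽) ∈ C := by simpa using hCcone 0 le_rfl Y hYC
  obtain ⟨w, rfl, hwC, hw⟩ := exists_linearIndependent_fin_mem hYC hY0 hs.symm
  have hdir : -∑ i : Fin n, w i.succ ∈ (affineSpan ℝ C).direction := by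
    rw [direction_affineSpan_of_zero_mem h0C]
    exact neg_mem (Submodule.sum_mem _ fun i _ ↦ Submodule.subset_span (hwC _))
  obtain ⟨t, ht, htpos⟩ :=
    (((eventually_add_smul_mem_of_mem_intrinsicInterior hY hdir).filter_mono
      nhdsWithin_le_nhds).and (self_mem_nhdsWithin (s := Ioi 0))).exists
  rw [smul_neg, ← sub_eq_add_neg] at ht
  refine ⟨spreadFamily w t, spreadFamily_mem hCconv hCcone hwC (le_of_lt htpos) ht,
    hw.spreadFamily htpos.ne', fun _ ↦ ((n : ℝ) + 1)⁻¹, fun _ ↦ by positivity, ?_⟩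
  rw [← Finset.smul_sum, inv_smul_sum_spreadFamily]

theorem stmt_14 {𝔽 : Type*} [NormedAddCommGroup 𝔽] [InnerProductSpace ℝ 𝔽]
    [FiniteDimensional ℝ 𝔽]
    (C : Set 𝔽) (hCcl : IsClosed C) (hCconv : Convex ℝ C)
    (hCcone : ∀ c : ℝ, 0 ≤ c → ∀ x ∈ C, c • x ∈ C)
    (s : ℕ) (hs : s = finrank ℝ ↥(Submodule.span ℝ C)) (hs1 : 1 ≤ s)
    (Y : 𝔽) (hY : Y ∈ intrinsicInterior ℝ C) (hY0 : Y ≠ 0) :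
    ∃ η : Fin s → 𝔽, (∀ i, η i ∈ C) ∧ LinearIndependent ℝ η ∧
      ∃ α : Fin s → ℝ, (∀ i, 0 < α i) ∧ Y = ∑ i, α i • η i :=
  stmt_14_general C hCconv hCcone s hs hs1 Y hY hY0
end
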